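/- Let X be a set, I a nonempty finite set, and f_i : X → X for each i ∈ I. The following two statements are equivalent. (I) There exist a metric d on X and a comparison function φ : [0,∞) → [0,∞) such that (X,d) is complete and bounded and each f_i is a φ-contraction with respect to d. (II) (a) For every α ∈ Λ(I), the set ⋂_{n∈ℕ} X_{[α]_n} has a unique element, denoted a_α; and (b) whenever a_α ≠ a_β for α,β ∈ Λ(I), there exists n₀ ∈ ℕ such that X_{[α]_{n₀}} ∩ X_{[β]_{n₀}} = ∅. -/

import Mathlib

/-!
(I) ⇒ (II): every cylinder `X_w` has diameter at most `φ^[|w|] C`, and these iterates tend to `0`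
because a positive limit would be a fixed point of the right-continuous `φ`. Completeness then
produces `a_α` as the limit of `f_{[α]_n}(x₀)`, and the diameter bound gives uniqueness and the
disjointness in (b).

(II) ⇒ (I): call `x` and `y` `n`-linked if they lie in two level-`n` cylinders that meet. Kőnig's
lemma on the finitely branching tree of words turns (II) into the statements that these relations
form the basis of a complete separated uniformity, for which the word maps `f_w` are uniformly
equicontinuous and shrink uniformly as `|w| → ∞`. For a compatible metric `ε` and `c_n ↓ 0` with
`min(ε, 1)`-diameter of level-`n` images at most `c_n²`, the metric
`d(x, y) = sup_w min(ε(f_w x, f_w y), 1) / c_{|w|}` is bounded and compatible, and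
`d(f_i x, f_i y) ≤ φ(d(x, y))` for `φ(u) = sup_n (c_{n+1} / c_n) min(u, c_{n+1})`.
-/

open Filter Topology Set

/-- `φ : [0,∞) → [0,∞)` is a comparison function: it maps `[0,∞)` into `[0,∞)`,
is increasing, satisfies `φ t < t` for `t > 0`, and is right-continuous. -/
def IsComparisonFn (φ : ℝ → ℝ) : Prop :=
  (∀ t : ℝ, 0 ≤ t → 0 ≤ φ t) ∧
  MonotoneOn φ (Set.Ici (0 : ℝ)) ∧
  (∀ t : ℝ, 0 < t → φ t < t) ∧
  (∀ t : ℝ, 0 ≤ t → ContinuousWithinAt φ (Set.Ici t) t)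

/-- `f_{α₁…αₙ} = f_{α₁} ∘ f_{α₂} ∘ … ∘ f_{αₙ}` (the identity for the empty word). -/
def WordMap {X I : Type*} (f : I → X → X) : List I → X → X
  | [] => id
  | i :: w => f i ∘ WordMap f w

/-- `[α]_n`: the finite word consisting of the first `n` letters of the infinite word `α`. -/
def Pref {I : Type*} (α : ℕ → I) (n : ℕ) : List I := List.ofFn (fun k : Fin n => α (k : ℕ))

/-- `X_w = f_w(X)`, the image of the whole space under the word map. -/
def WordSet {X I : Type*} (f : I → X → X) (w : List I) : Set X := Set.range (WordMap f w)

/-- A family `(f_i)_{i ∈ I}` of self-maps of `X` has attractor if: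
(a) for every infinite word `α`, `⋂ₙ X_{[α]ₙ}` has a unique element `a_α`;
(b) whenever `a_α ≠ a_β`, some `X_{[α]_{n₀}}` and `X_{[β]_{n₀}}` are disjoint. -/
def HasAttractor {X I : Type*} (f : I → X → X) : Prop :=
  (∀ α : ℕ → I, ∃! a : X, ∀ n : ℕ, a ∈ WordSet f (Pref α n)) ∧
  (∀ α β : ℕ → I, ∀ a b : X,
    (∀ n : ℕ, a ∈ WordSet f (Pref α n)) → (∀ n : ℕ, b ∈ WordSet f (Pref β n)) →
    a ≠ b →
    ∃ n₀ : ℕ, WordSet f (Pref α n₀) ∩ WordSet f (Pref β n₀) = ∅)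

open scoped Uniformity

section Words
variable {X I : Type*} (f : I → X → X)

theorem wordMap_append (u v : List I) : WordMap f (u ++ v) = WordMap f u ∘ WordMap f v := by
  induction u with
  | nil => rfl
  | cons i u ih => rw [List.cons_append, WordMap, WordMap, ih]; rfl

theorem wordSet_cons (i : I) (w : List I) : WordSet f (i :: w) = f i '' WordSet f w :=
  range_comp (f i) (WordMap f w)

theorem pref_succ (α : ℕ → I) (n : ℕ) : Pref α (n + 1) = α 0 :: Pref (fun k => α (k + 1)) n :=
  List.ofFn_succ

theorem pref_take (α : ℕ → I) {m n : ℕ} (h : m ≤ n) : (Pref α n).take m = Pref α m := by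
  refine List.ext_getElem (by simp [Pref, h]) fun k _ _ => ?_
  simp [Pref]

theorem antitone_wordSet_pref (α : ℕ → I) : Antitone fun n => WordSet f (Pref α n) := by
  refine antitone_nat_of_succ_le fun n => ?_
  rw [Pref, List.ofFn_succ', List.concat_eq_append, WordSet, WordSet, wordMap_append]
  exact range_comp_subset_range _ _

theorem wordSet_pref_subset_of_pref_eq {α β : ℕ → I} {m n : ℕ} (h : Pref α m = Pref β m)
    (hmn : m ≤ n) : WordSet f (Pref α n) ⊆ WordSet f (Pref β m) :=
  h ▸ antitone_wordSet_pref f α hmn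

end Words

/-- Kőnig's lemma on the finitely branching tree of prefixes. -/
theorem exists_frequently_pref_eq {J : Type*} [Finite J] (α : ℕ → ℕ → J) :
    ∃ β : ℕ → J, ∀ m, ∃ᶠ n in atTop, Pref (α n) m = Pref β m := by
  let A : ℕ → Type _ := fun i => {l : List J | ∃ᶠ n in atTop, Pref (α n) i = l}
  have length_eq : ∀ {i} (l : A i), l.1.length = i := fun l => by
    obtain ⟨n, hn⟩ := l.2.exists
    simp [← hn, Pref]
  have : ∀ i, Finite (A i) := fun i =>
    ((List.finite_length_eq J i).subset fun l hl => length_eq ⟨l, hl⟩).to_subtype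
  have : ∀ i, Nonempty (A i) := fun i => by
    have := (List.finite_length_eq J i).to_subtype
    obtain ⟨l, hl⟩ := Filter.frequently_exists (p := fun (l : {l : List J | l.length = i}) n =>
      Pref (α n) i = l.1) |>.1 <| (Eventually.of_forall (f := atTop) fun n =>
      ⟨⟨Pref (α n) i, by simp [Pref]⟩, rfl⟩).frequently
    exact ⟨⟨l.1, hl⟩⟩
  let π : {i j : ℕ} → i ≤ j → A j → A i := fun {i j} hij l =>
    ⟨l.1.take i, l.2.mono fun n hn => by rw [← hn, pref_take _ hij]⟩
  obtain ⟨F, hF⟩ := exists_seq_forall_proj_of_forall_finite π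
    (fun i l => Subtype.ext (List.take_of_length_le (length_eq l).le))
    (fun i j k hij hjk l => Subtype.ext (by simp [π, List.take_take, hij]))
    (fun i l => Set.toFinite _)
  refine ⟨fun k => (F (k + 1)).1.getD k (α 0 0), fun m => ?_⟩
  suffices h : Pref (fun k => (F (k + 1)).1.getD k (α 0 0)) m = (F m).1 from h ▸ (F m).2
  refine List.ext_getElem (by simp [Pref, length_eq]) fun k hk hk' => ?_
  have hkm : k + 1 ≤ m := by simpa [Pref] using hk
  have := congrArg Subtype.val (hF hkm)
  simp only [π] at this
  simp [Pref, ← this, List.getElem?_eq_getElem hk']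

theorem exists_frequently_forall_pref_eq {ι J : Type*} [Finite ι] [Finite J]
    (α : ℕ → ι → ℕ → J) :
    ∃ β : ι → ℕ → J, ∀ m, ∃ᶠ n in atTop, ∀ t, Pref (α n t) m = Pref (β t) m := by
  obtain ⟨β, hβ⟩ := exists_frequently_pref_eq fun n k t => α n t k
  refine ⟨fun t k => β k t, fun m => (hβ m).mono fun n hn t => ?_⟩
  simpa [Pref, List.map_ofFn, Function.comp_def] using congrArg (List.map (· t)) hn

namespace IsComparisonFn

variable {φ : ℝ → ℝ} (hφ : IsComparisonFn φ)
include hφ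

theorem map_zero : φ 0 = 0 := by
  obtain ⟨hnonneg, hmono, hlt, -⟩ := hφ
  by_contra h
  have hpos : 0 < φ 0 := (hnonneg 0 le_rfl).lt_of_ne' h
  exact (hlt _ hpos).not_ge (hmono (le_refl (0 : ℝ)) hpos.le hpos.le)

theorem le_self {t : ℝ} (ht : 0 ≤ t) : φ t ≤ t := by
  rcases ht.eq_or_lt with rfl | ht
  · exact hφ.map_zero.le
  · exact (hφ.2.2.1 t ht).le

theorem iterate_nonneg (n : ℕ) {t : ℝ} (ht : 0 ≤ t) : 0 ≤ φ^[n] t := by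
  induction n with
  | zero => exact ht
  | succ n ih => rw [Function.iterate_succ_apply']; exact hφ.1 _ ih

theorem iterate_le_iterate (n : ℕ) {s t : ℝ} (hs : 0 ≤ s) (hst : s ≤ t) :
    φ^[n] s ≤ φ^[n] t := by
  induction n with
  | zero => exact hst
  | succ n ih =>
    simp only [Function.iterate_succ_apply']
    exact hφ.2.1 (hφ.iterate_nonneg n hs) (hφ.iterate_nonneg n (hs.trans hst)) ih

/-- The iterates decrease to a limit `L ≥ 0`; right continuity makes `L` a fixed point of `φ`,
so `L = 0`. -/
theorem tendsto_iterate {t : ℝ} (ht : 0 ≤ t) : Tendsto (fun n => φ^[n] t) atTop (𝓝 0) := by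
  have hanti : Antitone fun n => φ^[n] t := antitone_nat_of_succ_le fun n => by
    rw [Function.iterate_succ_apply']
    exact hφ.le_self (hφ.iterate_nonneg n ht)
  have hbdd : BddBelow (range fun n => φ^[n] t) :=
    ⟨0, forall_mem_range.2 fun n => hφ.iterate_nonneg n ht⟩
  have hlim := tendsto_atTop_ciInf hanti hbdd
  set L := ⨅ n, φ^[n] t
  have hL : 0 ≤ L := le_ciInf fun n => hφ.iterate_nonneg n ht
  rcases hL.eq_or_lt with hL0 | hLpos
  · rwa [← hL0] at hlim
  have hwithin : Tendsto (fun n => φ^[n] t) atTop (𝓝[Ici L] L) :=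
    tendsto_nhdsWithin_iff.2 ⟨hlim, Eventually.of_forall fun n => ciInf_le hbdd n⟩
  have hfix : φ L = L := by
    refine tendsto_nhds_unique ((hφ.2.2.2 L hL).tendsto.comp hwithin) ?_
    simpa only [Function.comp_def, ← Function.iterate_succ_apply' φ] using
      hlim.comp (tendsto_add_atTop_nat 1)
  exact absurd hfix (hφ.2.2.1 L hLpos).ne

end IsComparisonFn

theorem dist_wordMap_le_iterate {X I : Type*} [PseudoMetricSpace X] {f : I → X → X}
    {φ : ℝ → ℝ} (hφ : IsComparisonFn φ) (hf : ∀ i x y, dist (f i x) (f i y) ≤ φ (dist x y))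
    (w : List I) (x y : X) : dist (WordMap f w x) (WordMap f w y) ≤ φ^[w.length] (dist x y) := by
  induction w with
  | nil => exact le_rfl
  | cons i w ih =>
    rw [List.length_cons, Function.iterate_succ_apply']
    exact (hf i _ _).trans (hφ.2.1 dist_nonneg (hφ.iterate_nonneg _ dist_nonneg) ih)

section ShrinkingWords

variable {X I : Type*} [MetricSpace X] {f : I → X → X} {r : ℕ → ℝ}
  (hdiam : ∀ w x y, dist (WordMap f w x) (WordMap f w y) ≤ r w.length)
include hdiam

theorem dist_le_of_mem_wordSet {w : List I} {a b : X} (ha : a ∈ WordSet f w)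
    (hb : b ∈ WordSet f w) : dist a b ≤ r w.length := by
  obtain ⟨x, rfl⟩ := ha
  obtain ⟨y, rfl⟩ := hb
  exact hdiam w x y

theorem eq_of_forall_mem_wordSet_pref (hr : Tendsto r atTop (𝓝 0)) {α : ℕ → I} {a b : X}
    (ha : ∀ n, a ∈ WordSet f (Pref α n)) (hb : ∀ n, b ∈ WordSet f (Pref α n)) : a = b :=
  dist_le_zero.1 <| ge_of_tendsto' hr fun n => by
    simpa [Pref] using dist_le_of_mem_wordSet hdiam (ha n) (hb n)

theorem exists_forall_mem_wordSet_pref [CompleteSpace X] [Nonempty X]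
    (hr : Tendsto r atTop (𝓝 0)) (hf : ∀ i, Continuous (f i)) (α : ℕ → I) :
    ∃ a, ∀ n, a ∈ WordSet f (Pref α n) := by
  obtain ⟨x₀⟩ := ‹Nonempty X›
  have hcauchy : ∀ α : ℕ → I, CauchySeq fun n => WordMap f (Pref α n) x₀ := fun α =>
    cauchySeq_of_le_tendsto_0 r (fun m n N hm hn => by
      simpa [Pref] using dist_le_of_mem_wordSet hdiam
        (antitone_wordSet_pref f α hm ⟨x₀, rfl⟩) (antitone_wordSet_pref f α hn ⟨x₀, rfl⟩)) hr
  choose p hp using fun α => cauchySeq_tendsto_of_complete (hcauchy α)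
  have hp_shift : ∀ α : ℕ → I, p α = f (α 0) (p fun k => α (k + 1)) := fun α =>
    tendsto_nhds_unique ((tendsto_add_atTop_iff_nat 1).2 (hp α))
      (by simpa [pref_succ, WordMap, Function.comp_def] using
        ((hf (α 0)).tendsto _).comp (hp fun k => α (k + 1)))
  refine ⟨p α, fun n => ?_⟩
  induction n generalizing α with
  | zero => exact ⟨p α, rfl⟩
  | succ n ih =>
    rw [pref_succ, wordSet_cons, hp_shift]
    exact mem_image_of_mem _ (ih _)

theorem hasAttractor_of_dist_wordMap_le [CompleteSpace X] [Nonempty X]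
    (hr : Tendsto r atTop (𝓝 0)) (hf : ∀ i, Continuous (f i)) : HasAttractor f := by
  refine ⟨fun α => ?_, fun α β a b ha hb hab => ?_⟩
  · obtain ⟨a, ha⟩ := exists_forall_mem_wordSet_pref hdiam hr hf α
    exact ⟨a, ha, fun b hb => eq_of_forall_mem_wordSet_pref hdiam hr hb ha⟩
  · obtain ⟨n, hn⟩ := (hr.eventually (gt_mem_nhds (half_pos (dist_pos.2 hab)))).exists
    refine ⟨n, eq_empty_of_forall_notMem fun c ⟨hcα, hcβ⟩ => ?_⟩
    have h1 := dist_le_of_mem_wordSet hdiam (ha n) hcα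
    have h2 := dist_le_of_mem_wordSet hdiam (hb n) hcβ
    simp only [Pref, List.length_ofFn] at h1 h2
    linarith [dist_triangle_right a b c]

end ShrinkingWords

theorem hasAttractor_of_comparison_contraction {X I : Type*} [MetricSpace X] [CompleteSpace X]
    [Nonempty X] {f : I → X → X} {φ : ℝ → ℝ} (hφ : IsComparisonFn φ) {C : ℝ}
    (hC : ∀ x y : X, dist x y ≤ C) (hf : ∀ i x y, dist (f i x) (f i y) ≤ φ (dist x y)) :
    HasAttractor f := by
  have hC0 : 0 ≤ C := dist_nonneg.trans (hC (Classical.arbitrary X) (Classical.arbitrary X))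
  refine hasAttractor_of_dist_wordMap_le (r := fun n => φ^[n] C) (fun w x y =>
    (dist_wordMap_le_iterate hφ hf w x y).trans (hφ.iterate_le_iterate _ dist_nonneg (hC x y)))
    (hφ.tendsto_iterate hC0) fun i => ?_
  exact (LipschitzWith.of_dist_le_mul (K := 1) fun x y => by
    simpa using (hf i x y).trans (hφ.le_self dist_nonneg)).continuous

/-- Each ratio `c (n + 1) / c n` is `< 1`, and only finitely many terms of the supremum can
exceed `u / 2`; hence `φ u < u`. -/
theorem exists_isComparisonFn_of_strictAnti {c : ℕ → ℝ} (hc : ∀ n, 0 < c n)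
    (hc_anti : StrictAnti c) (hc_lim : Tendsto c atTop (𝓝 0)) :
    ∃ φ, IsComparisonFn φ ∧ ∀ n u, 0 ≤ u → u ≤ c (n + 1) → c (n + 1) / c n * u ≤ φ u := by
  set t : ℕ → ℝ → ℝ := fun n u => c (n + 1) / c n * min u (c (n + 1))
  have hr_pos : ∀ n, 0 < c (n + 1) / c n := fun n => div_pos (hc _) (hc _)
  have hr_lt : ∀ n, c (n + 1) / c n < 1 := fun n =>
    (div_lt_one (hc n)).2 (hc_anti n.lt_succ_self)
  have ht_le : ∀ n u, t n u ≤ c (n + 1) := fun n u =>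
    (mul_le_mul_of_nonneg_left (min_le_right _ _) (hr_pos n).le).trans
      (mul_le_of_le_one_left (hc _).le (hr_lt n).le)
  have hbdd : ∀ u, BddAbove (range fun n => t n u) := fun u =>
    ⟨c 0, forall_mem_range.2 fun n => (ht_le n u).trans (hc_anti.antitone (Nat.zero_le _))⟩
  have ht_lip : ∀ n u v, t n u ≤ t n v + dist u v := fun n u v => by
    have h := (abs_min_sub_min_le_max u (c (n + 1)) v (c (n + 1))).trans_eq
      (by simp [Real.dist_eq] : max |u - v| |c (n + 1) - c (n + 1)| = dist u v)
    have := hr_pos n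
    have := hr_lt n
    simp only [t]
    nlinarith [le_abs_self (min u (c (n + 1)) - min v (c (n + 1))),
      abs_nonneg (min u (c (n + 1)) - min v (c (n + 1)))]
  refine ⟨fun u => ⨆ n, t n u, ⟨fun u hu => ?_, fun u _ v _ huv => ?_, fun u hu => ?_,
    fun u _ => ?_⟩, fun n u hu hle => ?_⟩
  · exact (mul_nonneg (hr_pos 0).le (le_min hu (hc 1).le)).trans (le_ciSup (hbdd u) 0)
  · exact ciSup_mono (hbdd v) fun n =>
      mul_le_mul_of_nonneg_left (min_le_min_right _ huv) (hr_pos n).le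
  · obtain ⟨M, hM⟩ := (hc_lim.eventually (gt_mem_nhds (half_pos hu))).exists
    obtain ⟨n₀, -, hn₀⟩ := (Finset.range (M + 1)).exists_max_image (t · u) ⟨0, by simp⟩
    have hbound : ∀ n, t n u ≤ max (t n₀ u) (u / 2) := fun n => by
      rcases le_or_gt n M with hn | hn
      · exact le_max_of_le_left (hn₀ n (Finset.mem_range.2 (Nat.lt_succ_of_le hn)))
      · exact le_max_of_le_right
          ((ht_le n u).trans ((hc_anti.antitone (by omega : M ≤ n + 1)).trans hM.le))
    refine (ciSup_le hbound).trans_lt (max_lt ?_ (half_lt_self hu))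
    calc t n₀ u ≤ c (n₀ + 1) / c n₀ * u :=
          mul_le_mul_of_nonneg_left (min_le_left _ _) (hr_pos n₀).le
      _ < u := mul_lt_of_lt_one_left hu (hr_lt n₀)
  · exact (LipschitzWith.of_le_add fun u v =>
      ciSup_le fun n => (ht_lip n u v).trans (by grw [le_ciSup (hbdd v) n])).continuous
        |>.continuousWithinAt
  · calc c (n + 1) / c n * u = t n u := by simp only [t, min_eq_left hle]
      _ ≤ ⨆ n, t n u := le_ciSup (hbdd u) n

theorem exists_strictAnti_sq_ge {δ : ℕ → ℝ} (hδ : Antitone δ) (hlim : Tendsto δ atTop (𝓝 0)) :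
    ∃ c : ℕ → ℝ, (∀ n, 0 < c n) ∧ StrictAnti c ∧ Tendsto c atTop (𝓝 0) ∧
      ∀ n, δ n ≤ c n ^ 2 := by
  have hpos : ∀ n, 0 < δ n + (1 / 2) ^ n := fun n => by
    have := hδ.le_of_tendsto hlim n
    positivity
  refine ⟨fun n => √(δ n + (1 / 2) ^ n), fun n => Real.sqrt_pos.2 (hpos n),
    strictAnti_nat_of_succ_lt fun n => Real.sqrt_lt_sqrt (hpos _).le ?_, ?_, fun n => ?_⟩
  · have := hδ n.le_succ
    have : (1 / 2 : ℝ) ^ (n + 1) < (1 / 2) ^ n :=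
      pow_lt_pow_right_of_lt_one₀ (by norm_num) (by norm_num) n.lt_succ_self
    linarith
  · simpa using (hlim.add (tendsto_pow_atTop_nhds_zero_of_lt_one (by norm_num)
      (by norm_num : (1 / 2 : ℝ) < 1))).sqrt
  · rw [Real.sq_sqrt (hpos n).le]
    linarith [pow_pos (by norm_num : (0 : ℝ) < 1 / 2) n]

theorem exists_strictAnti_sq_ge_min_dist_wordMap {X I : Type*} [PseudoMetricSpace X]
    (f : I → X → X)
    (hshrink : ∀ η > 0, ∃ N, ∀ w : List I, N ≤ w.length → ∀ x y,
      dist (WordMap f w x) (WordMap f w y) < η) :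
    ∃ c : ℕ → ℝ, (∀ n, 0 < c n) ∧ StrictAnti c ∧ Tendsto c atTop (𝓝 0) ∧
      ∀ w x y, min (dist (WordMap f w x) (WordMap f w y)) 1 ≤ c w.length ^ 2 := by
  set ρ : List I × X × X → ℝ :=
    fun p => min (dist (WordMap f p.1 p.2.1) (WordMap f p.1 p.2.2)) 1
  set δ : ℕ → ℝ := fun n => ⨆ p : {p : List I × X × X // n ≤ p.1.length}, ρ p
  have hρ : ∀ p, 0 ≤ ρ p := fun p => le_min dist_nonneg zero_le_one
  have hbdd : ∀ n, BddAbove (range fun p : {p : List I × X × X // n ≤ p.1.length} => ρ p) :=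
    fun n => ⟨1, forall_mem_range.2 fun p => min_le_right _ _⟩
  have hδ : Antitone δ := fun m n hmn => Real.iSup_le
    (fun p => le_ciSup (hbdd m) ⟨p.1, hmn.trans p.2⟩) (Real.iSup_nonneg fun p => hρ p)
  have hlim : Tendsto δ atTop (𝓝 0) := by
    refine tendsto_order.2 ⟨fun a ha => Eventually.of_forall fun n =>
      ha.trans_le (Real.iSup_nonneg fun p => hρ p), fun a ha => ?_⟩
    obtain ⟨N, hN⟩ := hshrink (a / 2) (half_pos ha)
    refine eventually_atTop.2 ⟨N, fun n hn => (Real.iSup_le (fun p => (min_le_left _ _).trans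
      (hN _ (hn.trans p.2) _ _).le) (half_pos ha).le).trans_lt (half_lt_self ha)⟩
  obtain ⟨c, hc, hc_anti, hc_lim, hδc⟩ := exists_strictAnti_sq_ge hδ hlim
  exact ⟨c, hc, hc_anti, hc_lim, fun w x y =>
    (le_ciSup (hbdd w.length) ⟨(w, x, y), le_rfl⟩).trans (hδc _)⟩

section ScaledWordDist

variable {X I : Type*} [MetricSpace X] (f : I → X → X) (c : ℕ → ℝ)

noncomputable def scaledWordDist (x y : X) : ℝ :=
  ⨆ w : List I, min (dist (WordMap f w x) (WordMap f w y)) 1 / c w.length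

variable {f c}

theorem scaledWordDist_self (x : X) : scaledWordDist f c x x = 0 := by
  simp [scaledWordDist]

theorem scaledWordDist_comm (x y : X) : scaledWordDist f c x y = scaledWordDist f c y x := by
  simp only [scaledWordDist, dist_comm]

variable (hc : ∀ n, 0 < c n)
  (hword : ∀ w x y, min (dist (WordMap f w x) (WordMap f w y)) 1 ≤ c w.length ^ 2)
include hc hword

theorem scaledWordDist_term_le (w : List I) (x y : X) :
    min (dist (WordMap f w x) (WordMap f w y)) 1 / c w.length ≤ c w.length := by
  rw [div_le_iff₀ (hc _), ← sq]
  exact hword w x y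

variable (hc_anti : Antitone c)
include hc_anti

theorem bddAbove_scaledWordDist (x y : X) :
    BddAbove
      (range fun w : List I => min (dist (WordMap f w x) (WordMap f w y)) 1 / c w.length) :=
  ⟨c 0, forall_mem_range.2 fun w =>
    (scaledWordDist_term_le hc hword w x y).trans (hc_anti (Nat.zero_le _))⟩

theorem le_scaledWordDist (w : List I) (x y : X) :
    min (dist (WordMap f w x) (WordMap f w y)) 1 / c w.length ≤ scaledWordDist f c x y :=
  le_ciSup (bddAbove_scaledWordDist hc hword hc_anti x y) w

theorem scaledWordDist_le (x y : X) : scaledWordDist f c x y ≤ c 0 :=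
  ciSup_le fun w => (scaledWordDist_term_le hc hword w x y).trans (hc_anti (Nat.zero_le _))

theorem scaledWordDist_triangle (x y z : X) :
    scaledWordDist f c x z ≤ scaledWordDist f c x y + scaledWordDist f c y z := by
  refine ciSup_le fun w => ?_
  refine le_trans ?_ (add_le_add (le_scaledWordDist hc hword hc_anti w x y)
    (le_scaledWordDist hc hword hc_anti w y z))
  rw [← add_div]
  refine div_le_div_of_nonneg_right ?_ (hc _).le
  have := dist_triangle (WordMap f w x) (WordMap f w y) (WordMap f w z)
  have := dist_nonneg (x := WordMap f w x) (y := WordMap f w y)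
  have := dist_nonneg (x := WordMap f w y) (y := WordMap f w z)
  simp only [min_def]
  split_ifs <;> linarith

theorem min_dist_one_le_mul_scaledWordDist (x y : X) :
    min (dist x y) 1 ≤ c 0 * scaledWordDist f c x y := by
  rw [← div_le_iff₀' (hc 0)]
  exact le_scaledWordDist hc hword hc_anti [] x y

theorem eq_of_scaledWordDist_eq_zero {x y : X} (h : scaledWordDist f c x y = 0) : x = y := by
  have := min_dist_one_le_mul_scaledWordDist hc hword hc_anti x y
  rw [h, mul_zero, min_le_iff] at this
  exact dist_le_zero.1 (this.resolve_right (by norm_num))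

theorem dist_lt_of_scaledWordDist_lt {η : ℝ} (hη : 0 < η) :
    ∃ θ > 0, ∀ x y : X, scaledWordDist f c x y < θ → dist x y < η := by
  refine ⟨min η 1 / c 0, div_pos (lt_min hη one_pos) (hc 0), fun x y hxy => ?_⟩
  have h := (min_dist_one_le_mul_scaledWordDist hc hword hc_anti x y).trans_lt
    ((lt_div_iff₀' (hc 0)).1 hxy)
  exact lt_of_not_ge fun hge => h.not_ge (min_le_min_right 1 hge)

/-- Long words contribute at most `c_{|w|}`, which is small; the finitely many lengths below
are controlled by uniform equicontinuity. -/
theorem scaledWordDist_lt_of_dist_lt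
    (hequi : UniformEquicontinuous fun w : List I => WordMap f w)
    (hc_lim : Tendsto c atTop (𝓝 0)) {η : ℝ} (hη : 0 < η) :
    ∃ θ > 0, ∀ x y : X, dist x y < θ → scaledWordDist f c x y < η := by
  obtain ⟨M, hM⟩ := (hc_lim.eventually (gt_mem_nhds (half_pos hη))).exists
  obtain ⟨θ, hθ, hθw⟩ := Metric.uniformEquicontinuous_iff.1 hequi (η / 2 * c M)
    (mul_pos (half_pos hη) (hc M))
  refine ⟨θ, hθ, fun x y hxy => (ciSup_le fun w => ?_).trans_lt (half_lt_self hη)⟩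
  rcases le_or_gt M w.length with hw | hw
  · exact (scaledWordDist_term_le hc hword w x y).trans ((hc_anti hw).trans hM.le)
  · calc min (dist (WordMap f w x) (WordMap f w y)) 1 / c w.length
        ≤ η / 2 * c M / c w.length :=
          div_le_div_of_nonneg_right ((min_le_left _ _).trans (hθw x y hxy w).le) (hc _).le
      _ ≤ η / 2 * c M / c M :=
          div_le_div_of_nonneg_left (mul_pos (half_pos hη) (hc M)).le (hc M) (hc_anti hw.le)
      _ = η / 2 := mul_div_cancel_right₀ _ (hc M).ne'

theorem scaledWordDist_map_le {φ : ℝ → ℝ} (hφ_mono : MonotoneOn φ (Ici 0))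
    (hφ : ∀ n u, 0 ≤ u → u ≤ c (n + 1) → c (n + 1) / c n * u ≤ φ u) (i : I) (x y : X) :
    scaledWordDist f c (f i x) (f i y) ≤ φ (scaledWordDist f c x y) := by
  refine ciSup_le fun w => ?_
  have happ : ∀ z, WordMap f w (f i z) = WordMap f (w ++ [i]) z := fun z => by
    rw [wordMap_append]; rfl
  set s := min (dist (WordMap f (w ++ [i]) x) (WordMap f (w ++ [i]) y)) 1
  have hs : 0 ≤ s := le_min dist_nonneg zero_le_one
  have hu := le_scaledWordDist hc hword hc_anti (w ++ [i]) x y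
  have hu' := scaledWordDist_term_le hc hword (w ++ [i]) x y
  simp only [List.length_append, List.length_singleton] at hu hu'
  calc min (dist (WordMap f w (f i x)) (WordMap f w (f i y))) 1 / c w.length
      = c (w.length + 1) / c w.length * (s / c (w.length + 1)) := by
        rw [happ, happ]
        field_simp [(hc (w.length + 1)).ne']
        rfl
    _ ≤ φ (s / c (w.length + 1)) := hφ _ _ (div_nonneg hs (hc _).le) hu'
    _ ≤ φ (scaledWordDist f c x y) :=
        hφ_mono (div_nonneg hs (hc _).le) ((div_nonneg hs (hc _).le).trans hu) hu

noncomputable abbrev scaledWordMetric : MetricSpace X where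
  dist := scaledWordDist f c
  dist_self := scaledWordDist_self
  dist_comm := scaledWordDist_comm
  dist_triangle := scaledWordDist_triangle hc hword hc_anti
  eq_of_dist_eq_zero := eq_of_scaledWordDist_eq_zero hc hword hc_anti

theorem uniformity_scaledWordMetric
    (hequi : UniformEquicontinuous fun w : List I => WordMap f w)
    (hc_lim : Tendsto c atTop (𝓝 0)) :
    @uniformity X (scaledWordMetric hc hword hc_anti).toUniformSpace = 𝓤 X :=
  (@Metric.uniformity_basis_dist X (scaledWordMetric hc hword hc_anti).toPseudoMetricSpace).ext
    Metric.uniformity_basis_dist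
    (fun _ hη => (scaledWordDist_lt_of_dist_lt hc hword hc_anti hequi hc_lim hη).imp
      fun _ ⟨hθ, h⟩ => ⟨hθ, fun p hp => h p.1 p.2 hp⟩)
    (fun _ hη => (dist_lt_of_scaledWordDist_lt hc hword hc_anti hη).imp
      fun _ ⟨hθ, h⟩ => ⟨hθ, fun p hp => h p.1 p.2 hp⟩)

end ScaledWordDist

theorem exists_bounded_comparison_metric {X I : Type*} [UniformSpace X]
    [IsCountablyGenerated (𝓤 X)] [T0Space X] (f : I → X → X)
    (hequi : UniformEquicontinuous fun w : List I => WordMap f w)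
    (hshrink : ∀ s ∈ 𝓤 X, ∃ N, ∀ w : List I, N ≤ w.length → ∀ x y,
      (WordMap f w x, WordMap f w y) ∈ s) :
    ∃ (m : MetricSpace X) (φ : ℝ → ℝ), IsComparisonFn φ ∧
      m.toUniformSpace = ‹UniformSpace X› ∧ (∃ C : ℝ, ∀ x y : X, m.dist x y ≤ C) ∧
      ∀ i x y, m.dist (f i x) (f i y) ≤ φ (m.dist x y) := by
  let _ : MetricSpace X := UniformSpace.metricSpace X
  obtain ⟨c, hc, hc_anti, hc_lim, hword⟩ :=
    exists_strictAnti_sq_ge_min_dist_wordMap f fun η hη =>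
      (hshrink _ (Metric.dist_mem_uniformity hη)).imp fun N hN w hw x y => hN w hw x y
  obtain ⟨φ, hφ, hφc⟩ := exists_isComparisonFn_of_strictAnti hc hc_anti hc_lim
  exact ⟨(scaledWordMetric hc hword hc_anti.antitone).replaceUniformity
      (uniformity_scaledWordMetric hc hword hc_anti.antitone hequi hc_lim).symm, φ, hφ, rfl,
    ⟨c 0, scaledWordDist_le hc hword hc_anti.antitone⟩,
    scaledWordDist_map_le hc hword hc_anti.antitone hφ.2.1 hφc⟩

section LinkRel

variable {X I : Type*} (f : I → X → X)

def CylindersMeet (n : ℕ) (α β : ℕ → I) : Prop :=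
  (WordSet f (Pref α n) ∩ WordSet f (Pref β n)).Nonempty

def linkRel (n : ℕ) : Set (X × X) :=
  {p | p.1 = p.2 ∨ ∃ α β : ℕ → I, p.1 ∈ WordSet f (Pref α n) ∧ p.2 ∈ WordSet f (Pref β n) ∧
    CylindersMeet f n α β}

variable {f}

theorem CylindersMeet.of_pref_eq {α β α' β' : ℕ → I} {m n : ℕ} (h : CylindersMeet f n α β)
    (hα : Pref α m = Pref α' m) (hβ : Pref β m = Pref β' m) (hmn : m ≤ n) :
    CylindersMeet f m α' β' :=
  h.mono (inter_subset_inter (wordSet_pref_subset_of_pref_eq f hα hmn)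
    (wordSet_pref_subset_of_pref_eq f hβ hmn))

theorem mem_linkRel_of_mem_wordSet {n : ℕ} {α : ℕ → I} {x y : X}
    (hx : x ∈ WordSet f (Pref α n)) (hy : y ∈ WordSet f (Pref α n)) : (x, y) ∈ linkRel f n :=
  Or.inr ⟨α, α, hx, hy, x, hx, hx⟩

theorem linkRel_symm {n : ℕ} {x y : X} (h : (x, y) ∈ linkRel f n) : (y, x) ∈ linkRel f n := by
  rcases h with h | ⟨α, β, hx, hy, z, hzα, hzβ⟩
  · exact Or.inl h.symm
  · exact Or.inr ⟨β, α, hy, hx, z, hzβ, hzα⟩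

variable (f) in
theorem linkRel_antitone : Antitone (linkRel (X := X) f) := by
  rintro m n hmn ⟨x, y⟩ (h | ⟨α, β, hx, hy, hαβ⟩)
  · exact Or.inl h
  · exact Or.inr ⟨α, β, antitone_wordSet_pref f α hmn hx, antitone_wordSet_pref f β hmn hy,
      hαβ.of_pref_eq rfl rfl hmn⟩

theorem mem_linkRel_zero [Nonempty I] (x y : X) : (x, y) ∈ linkRel f 0 :=
  mem_linkRel_of_mem_wordSet (α := Classical.arbitrary _) ⟨x, rfl⟩ ⟨y, rfl⟩

theorem map_mem_linkRel (i : I) {n : ℕ} {x y : X} (h : (x, y) ∈ linkRel f n) :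
    (f i x, f i y) ∈ linkRel f (n + 1) := by
  rcases h with h | ⟨α, β, hx, hy, z, hzα, hzβ⟩
  · exact Or.inl (congrArg (f i) h)
  · set cons : (ℕ → I) → ℕ → I := fun γ k => if k = 0 then i else γ (k - 1)
    have hcons : ∀ γ, WordSet f (Pref (cons γ) (n + 1)) = f i '' WordSet f (Pref γ n) :=
      fun γ => by simp [pref_succ, wordSet_cons, cons]
    refine Or.inr ⟨cons α, cons β, ?_, ?_, f i z, ?_, ?_⟩ <;>
      rw [hcons] <;> exact mem_image_of_mem _ ‹_›

theorem wordMap_mem_linkRel (w : List I) {n : ℕ} {x y : X} (h : (x, y) ∈ linkRel f n) :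
    (WordMap f w x, WordMap f w y) ∈ linkRel f (w.length + n) := by
  induction w with
  | nil => simpa [WordMap] using h
  | cons i w ih => simpa [WordMap, add_right_comm] using map_mem_linkRel i ih

variable (f) in
theorem hasBasis_iInf_linkRel :
    (⨅ n, 𝓟 (linkRel (X := X) f n)).HasBasis (fun _ => True) (linkRel f) :=
  hasBasis_iInf_principal (linkRel_antitone f).directed_ge

end LinkRel

namespace HasAttractor

variable {X I : Type*} {f : I → X → X} (h : HasAttractor f)
include h

theorem eq_of_forall_cylindersMeet {α β : ℕ → I} {a b : X} (ha : ∀ n, a ∈ WordSet f (Pref α n))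
    (hb : ∀ n, b ∈ WordSet f (Pref β n)) (hαβ : ∀ n, CylindersMeet f n α β) : a = b := by
  by_contra hab
  obtain ⟨n, hn⟩ := h.2 α β a b ha hb hab
  simpa [CylindersMeet, hn] using hαβ n

variable [Finite I]

theorem eq_of_forall_mem_linkRel {x y : X} (hxy : ∀ n, (x, y) ∈ linkRel f n) : x = y := by
  by_contra hne
  choose α β hx hy hαβ using fun n => (hxy n).resolve_left hne
  obtain ⟨γ, hγ⟩ := exists_frequently_forall_pref_eq fun n => ![α n, β n]
  have hlim : ∀ m, x ∈ WordSet f (Pref (γ 0) m) ∧ y ∈ WordSet f (Pref (γ 1) m) ∧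
      CylindersMeet f m (γ 0) (γ 1) := fun m => by
    obtain ⟨n, hmn, hpref⟩ := (hγ m).forall_exists_of_atTop m
    exact ⟨wordSet_pref_subset_of_pref_eq f (hpref 0) hmn (hx n),
      wordSet_pref_subset_of_pref_eq f (hpref 1) hmn (hy n),
      (hαβ n).of_pref_eq (hpref 0) (hpref 1) hmn⟩
  exact hne (h.eq_of_forall_cylindersMeet (fun m => (hlim m).1) (fun m => (hlim m).2.1)
    fun m => (hlim m).2.2)

/-- A chain `x ~ y ~ z` of `k`-links whose ends are not `n`-linked, for every `k`, would give in
the limit four words with equal attractor points whose level-`n` cylinders for the end words are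
disjoint. -/
theorem exists_linkRel_trans (n : ℕ) :
    ∃ k, ∀ x y z, (x, y) ∈ linkRel f k → (y, z) ∈ linkRel f k → (x, z) ∈ linkRel f n := by
  by_contra! hbad
  have hchain : ∀ k, ∃ α : Fin 4 → ℕ → I, CylindersMeet f (k + n) (α 0) (α 1) ∧
      CylindersMeet f (k + n) (α 1) (α 2) ∧ CylindersMeet f (k + n) (α 2) (α 3) ∧
      ¬CylindersMeet f n (α 0) (α 3) := fun k => by
    obtain ⟨x, y, z, hxy, hyz, hxz⟩ := hbad (k + n)
    have hkn : n ≤ k + n := Nat.le_add_left n k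
    rcases hxy with hxy | ⟨α₀, α₁, hx, hy, h01⟩
    · obtain rfl : x = y := hxy
      exact absurd (linkRel_antitone f hkn hyz) hxz
    rcases hyz with hyz | ⟨α₂, α₃, hy', hz, h23⟩
    · obtain rfl : y = z := hyz
      exact absurd (linkRel_antitone f hkn (Or.inr ⟨α₀, α₁, hx, hy, h01⟩)) hxz
    exact ⟨![α₀, α₁, α₂, α₃], h01, ⟨y, hy, hy'⟩, h23, fun h03 => hxz (Or.inr ⟨α₀, α₃,
      antitone_wordSet_pref f α₀ hkn hx, antitone_wordSet_pref f α₃ hkn hz, h03⟩)⟩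
  choose α hα using hchain
  obtain ⟨β, hβ⟩ := exists_frequently_forall_pref_eq α
  have hmeet : ∀ j j', (∀ k, CylindersMeet f (k + n) (α k j) (α k j')) →
      ∀ m, CylindersMeet f m (β j) (β j') := fun j j' hjj' m => by
    obtain ⟨k, hmk, hpref⟩ := (hβ m).forall_exists_of_atTop m
    exact (hjj' k).of_pref_eq (hpref j) (hpref j') (hmk.trans (Nat.le_add_right k n))
  choose a ha using fun γ => (h.1 γ).exists
  have h01 := h.eq_of_forall_cylindersMeet (ha _) (ha _) (hmeet 0 1 fun k => (hα k).1)
  have h12 := h.eq_of_forall_cylindersMeet (ha _) (ha _) (hmeet 1 2 fun k => (hα k).2.1)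
  have h23 := h.eq_of_forall_cylindersMeet (ha _) (ha _) (hmeet 2 3 fun k => (hα k).2.2.1)
  obtain ⟨k, hpref⟩ := (hβ n).exists
  refine (hα k).2.2.2 ⟨a (β 0), ?_, ?_⟩
  · rw [hpref 0]
    exact ha _ n
  · rw [hpref 3, h01, h12, h23]
    exact ha _ n

abbrev linkUniformity : UniformSpace X :=
  .ofCore <| .mk' (⨅ n, 𝓟 (linkRel f n))
    (fun _ hr _ => let ⟨_, _, hn⟩ := (hasBasis_iInf_linkRel f).mem_iff.1 hr; hn (Or.inl rfl))
    (fun _ hr => let ⟨n, _, hn⟩ := (hasBasis_iInf_linkRel f).mem_iff.1 hr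
      (hasBasis_iInf_linkRel f).mem_iff.2 ⟨n, trivial, fun _ hp => hn (linkRel_symm hp)⟩)
    (fun _ hr => let ⟨n, _, hn⟩ := (hasBasis_iInf_linkRel f).mem_iff.1 hr
      let ⟨k, hk⟩ := h.exists_linkRel_trans n
      ⟨linkRel f k, (hasBasis_iInf_linkRel f).mem_of_mem trivial,
        fun ⟨x, z⟩ ⟨y, hxy, hyz⟩ => hn (hk x y z hxy hyz)⟩)

theorem hasBasis_linkUniformity :
    (@uniformity X h.linkUniformity).HasBasis (fun _ => True) (linkRel f) :=
  hasBasis_iInf_linkRel f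

/-- A Cauchy sequence either settles at a point lying in no level-`n` cylinder, or visits
level-`n` cylinders for every `n`; in the latter case a limit word of those cylinders gives a
cluster point. -/
theorem completeSpace_linkUniformity : @CompleteSpace X h.linkUniformity := by
  let _ : UniformSpace X := h.linkUniformity
  have hb := h.hasBasis_linkUniformity
  have := hb.isCountablyGenerated
  refine UniformSpace.complete_of_cauchySeq_tendsto fun u hu => ?_
  suffices ∃ z, ∀ n, ∃ᶠ k in atTop, (u k, z) ∈ linkRel f n from
    let ⟨z, hz⟩ := this
    ⟨z, le_nhds_of_cauchy_adhp hu
      ((nhds_basis_uniformity hb).mapClusterPt_iff_frequently.2 fun n _ => hz n)⟩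
  by_cases hdeep : ∀ n N, ∃ k ≥ N, ∃ α : ℕ → I, u k ∈ WordSet f (Pref α n)
  · choose k hk α hα using hdeep
    obtain ⟨β, hβ⟩ := exists_frequently_pref_eq fun n => α n n
    obtain ⟨z, hz⟩ := (h.1 β).exists
    refine ⟨z, fun m => frequently_atTop.2 fun N => ?_⟩
    obtain ⟨n, hn, hpref⟩ := (hβ m).forall_exists_of_atTop (max m N)
    exact ⟨k n n, (le_max_right _ _).trans (hn.trans (hk n n)), mem_linkRel_of_mem_wordSet
      (wordSet_pref_subset_of_pref_eq f hpref ((le_max_left _ _).trans hn) (hα n n)) (hz m)⟩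
  · push Not at hdeep
    obtain ⟨n, N, hN⟩ := hdeep
    obtain ⟨K, hK⟩ := hb.cauchySeq_iff.1 hu n trivial
    refine ⟨u (max N K), fun m => (eventually_atTop.2 ⟨max N K, fun k hk => ?_⟩).frequently⟩
    rcases hK k (le_of_max_le_right hk) (max N K) (le_max_right _ _) with heq | ⟨α, -, hα, -⟩
    · exact Or.inl heq
    · exact absurd hα (hN k (le_of_max_le_left hk) α)

theorem exists_complete_comparison_metric [Nonempty I] :
    ∃ (m : MetricSpace X) (φ : ℝ → ℝ), IsComparisonFn φ ∧ @CompleteSpace X m.toUniformSpace ∧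
      (∃ C : ℝ, ∀ x y : X, m.dist x y ≤ C) ∧
      ∀ i x y, m.dist (f i x) (f i y) ≤ φ (m.dist x y) := by
  let _ : UniformSpace X := h.linkUniformity
  have hb := h.hasBasis_linkUniformity
  have := hb.isCountablyGenerated
  have : T0Space X := t0Space_iff_uniformity.2 fun x y hxy =>
    h.eq_of_forall_mem_linkRel fun n => hxy _ (hb.mem_of_mem trivial)
  have hequi : UniformEquicontinuous fun w : List I => WordMap f w :=
    (hb.uniformEquicontinuous_iff hb).2 fun n _ => ⟨n, trivial, fun x y hxy w =>
      linkRel_antitone f (Nat.le_add_left n _) (wordMap_mem_linkRel w hxy)⟩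
  have hshrink : ∀ s ∈ 𝓤 X, ∃ N, ∀ w : List I, N ≤ w.length → ∀ x y,
      (WordMap f w x, WordMap f w y) ∈ s := fun s hs =>
    let ⟨N, _, hN⟩ := hb.mem_iff.1 hs
    ⟨N, fun w hw x y =>
      hN (linkRel_antitone f hw (wordMap_mem_linkRel w (mem_linkRel_zero x y)))⟩
  obtain ⟨m, φ, hφ, hm, hC, hf⟩ := exists_bounded_comparison_metric f hequi hshrink
  exact ⟨m, φ, hφ, hm ▸ h.completeSpace_linkUniformity, hC, hf⟩

end HasAttractor

/-- **Theorem 3.22.** A finite family of self-maps of `X` admits a complete and bounded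
metric making all its members `φ`-contractions for a single comparison function `φ`
if and only if it has attractor. -/
theorem metric_comparison_iff_hasAttractor {X I : Type*} [Finite I] [Nonempty I]
    [Nonempty X] (f : I → X → X) :
    (∃ (m : MetricSpace X) (φ : ℝ → ℝ),
        IsComparisonFn φ ∧
        @CompleteSpace X m.toUniformSpace ∧
        (∃ C : ℝ, ∀ x y : X, m.dist x y ≤ C) ∧
        (∀ i : I, ∀ x y : X, m.dist (f i x) (f i y) ≤ φ (m.dist x y))) ↔
      ((∀ α : ℕ → I, ∃! a : X, ∀ n : ℕ, a ∈ WordSet f (Pref α n)) ∧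
       (∀ α β : ℕ → I, ∀ a b : X,
         (∀ n : ℕ, a ∈ WordSet f (Pref α n)) → (∀ n : ℕ, b ∈ WordSet f (Pref β n)) →
         a ≠ b →
         ∃ n₀ : ℕ, WordSet f (Pref α n₀) ∩ WordSet f (Pref β n₀) = ∅)) := by
  refine ⟨fun ⟨m, φ, hφ, hcomplete, ⟨C, hC⟩, hf⟩ => ?_,
    fun h => HasAttractor.exists_complete_comparison_metric h⟩
  let _ : MetricSpace X := m
  exact hasAttractor_of_comparison_contraction hφ hC hf
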